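/- If γ is an elementary cycle of a finite connected graph Γ, then the projections {π(e_j) : j ∈ γ⁰} span a codimension-one subspace of H = H_1(Γ,ℝ), namely the orthogonal complement γ^⊥ of γ in H. -/

import Mathlib

open scoped RealInnerProductSpace
open Classical

structure Digraph' (V E : Type) where
  s : E → V
  t : E → V

namespace Digraph'

variable {V E : Type} [Fintype V] [Fintype E] [DecidableEq V] [DecidableEq E]

/-- boundary map ∂ : C₁ → C₀, ∂e = source e − target e -/
noncomputable def bd (G : Digraph' V E) :
    EuclideanSpace ℝ E →ₗ[ℝ] EuclideanSpace ℝ V :=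
  Matrix.toEuclideanLin (Matrix.of fun v e =>
    (if G.s e = v then (1:ℝ) else 0) - (if G.t e = v then (1:ℝ) else 0))

/-- coboundary map δ : C₀ → C₁ -/
noncomputable def cobd (G : Digraph' V E) :
    EuclideanSpace ℝ V →ₗ[ℝ] EuclideanSpace ℝ E :=
  Matrix.toEuclideanLin (Matrix.of fun e v =>
    (if G.s e = v then (1:ℝ) else 0) - (if G.t e = v then (1:ℝ) else 0))

/-- orthogonal projection onto H₁(Γ,ℝ) = ker ∂, valued in the ambient space -/
noncomputable def proj (G : Digraph' V E) (x : EuclideanSpace ℝ E) : EuclideanSpace ℝ E :=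
  (Submodule.orthogonalProjection (LinearMap.ker (bd G)) x : EuclideanSpace ℝ E)

/-- reachability using only edges in S (edges traversable both ways) -/
def Reach (G : Digraph' V E) (S : Set E) : V → V → Prop :=
  Relation.ReflTransGen (fun a b => ∃ e ∈ S, (G.s e = a ∧ G.t e = b) ∨ (G.s e = b ∧ G.t e = a))

def Connected (G : Digraph' V E) : Prop := ∀ a b : V, Reach G Set.univ a b

/-- an edge is a bridge if its removal disconnects the graph -/
def IsBridge (G : Digraph' V E) (e : E) : Prop := ¬ ∀ a b : V, Reach G {e}ᶜ a b

def Bridgeless (G : Digraph' V E) : Prop := ∀ e : E, ¬ IsBridge G e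

/-- directed reachability -/
def DirReach (G : Digraph' V E) : V → V → Prop :=
  Relation.ReflTransGen (fun a b => ∃ e, G.s e = a ∧ G.t e = b)

def StronglyConnected (G : Digraph' V E) : Prop := ∀ a b : V, DirReach G a b

/-- a step of a walk: an edge with a direction of traversal (`true` = forward) -/
def stepSource (G : Digraph' V E) (st : E × Bool) : V := if st.2 then G.s st.1 else G.t st.1
def stepTarget (G : Digraph' V E) (st : E × Bool) : V := if st.2 then G.t st.1 else G.s st.1

/-- `IsWalk G u l v` : `l` is a walk from `u` to `v` -/
def IsWalk (G : Digraph' V E) : V → List (E × Bool) → V → Prop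
  | u, [], w => u = w
  | u, st :: rest, w => stepSource G st = u ∧ IsWalk G (stepTarget G st) rest w

/-- a path: a walk with all vertices distinct -/
def IsPath (G : Digraph' V E) (u : V) (l : List (E × Bool)) (v : V) : Prop :=
  IsWalk G u l v ∧ (u :: l.map (stepTarget G)).Nodup

/-- a circuit at u: a nonempty closed walk with distinct vertices and distinct edges -/
def IsCircuit (G : Digraph' V E) (u : V) (l : List (E × Bool)) : Prop :=
  l ≠ [] ∧ IsWalk G u l u ∧ (l.map (stepTarget G)).Nodup ∧ (l.map Prod.fst).Nodup

/-- directed walk -/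
def IsDirWalk (G : Digraph' V E) : V → List E → V → Prop
  | u, [], w => u = w
  | u, e :: rest, w => G.s e = u ∧ IsDirWalk G (G.t e) rest w

def IsDirPath (G : Digraph' V E) (u : V) (l : List E) (v : V) : Prop :=
  IsDirWalk G u l v ∧ (u :: l.map G.t).Nodup

/-- directed circuit at u -/
def IsDirCircuit (G : Digraph' V E) (u : V) (l : List E) : Prop :=
  l ≠ [] ∧ IsDirWalk G u l u ∧ (l.map G.t).Nodup ∧ l.Nodup

/-- signed edge-sum λ(w) ∈ C₁ of a walk -/
noncomputable def lam (_G : Digraph' V E) (l : List (E × Bool)) : EuclideanSpace ℝ E :=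
  (l.map fun st => (if st.2 then (1:ℝ) else -1) • EuclideanSpace.single st.1 (1:ℝ)).sum

/-- edge-sum λ(p) of a directed walk -/
noncomputable def dirlam (_G : Digraph' V E) (l : List E) : EuclideanSpace ℝ E :=
  (l.map fun e => EuclideanSpace.single e (1:ℝ)).sum

/-- a graph-theoretical cycle: an integral 1-cycle with coefficients in {0, ±1} -/
def IsCycle (G : Digraph' V E) (γ : EuclideanSpace ℝ E) : Prop :=
  bd G γ = 0 ∧ ∀ j, γ j = 0 ∨ γ j = 1 ∨ γ j = -1

/-- an elementary cycle -/
def Elementary (G : Digraph' V E) (γ : EuclideanSpace ℝ E) : Prop :=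
  IsCycle G γ ∧ γ ≠ 0 ∧
    ¬ ∃ γ₁ γ₂, IsCycle G γ₁ ∧ IsCycle G γ₂ ∧ γ₁ ≠ 0 ∧ γ₂ ≠ 0 ∧
      (∀ j, γ₁ j = 0 ∨ γ₂ j = 0) ∧ γ = γ₁ + γ₂

noncomputable def plusSet (_G : Digraph' V E) (γ : EuclideanSpace ℝ E) : Finset E :=
  Finset.univ.filter fun j => γ j = 1

noncomputable def minusSet (_G : Digraph' V E) (γ : EuclideanSpace ℝ E) : Finset E :=
  Finset.univ.filter fun j => γ j = -1

end Digraph'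

/-!
Each `π(e_j)` with `γ_j = 0` lies in `H ∩ γᗮ`, because `⟪π(e_j), γ⟫ = γ_j`. Conversely, a cycle
`z ∈ H ∩ γᗮ` orthogonal to all of them vanishes off the support of `γ`, so it suffices that every
cycle supported in `supp γ` is a multiple of `γ`. Reverse the edges where `γ = -1`, so that `γ`
becomes the indicator of its support, and subtract `c • γ`, where `c` is the least value of `z` on
`supp γ` in this orientation. What is left is a nonnegative circulation vanishing on an edge of
`supp γ`. Were it nonzero, it would contain a directed cycle (by conservation, following
positive outgoing edges never gets stuck, so the walk closes up), and restricting `γ` to that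
cycle and to its complement would split `γ` into two edge-disjoint cycles.
-/

theorem Function.exists_iterate_mem_periodicPts {α : Type*} [Finite α] (f : α → α) (x : α) :
    ∃ n, f^[n] x ∈ Function.periodicPts f := by
  obtain ⟨a, b, hab, hfab⟩ := Finite.exists_ne_map_eq_of_infinite fun n => f^[n] x
  wlog h : a < b generalizing a b
  · exact this b a hab.symm hfab.symm (hab.lt_or_gt.resolve_left h)
  refine ⟨a, Function.mk_mem_periodicPts (Nat.sub_pos_of_lt h) ?_⟩
  rw [Function.IsPeriodicPt, Function.IsFixedPt, ← Function.iterate_add_apply,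
    Nat.sub_add_cancel h.le]
  exact hfab.symm

section Coordinates

variable {E : Type}

noncomputable def negOn (N : Set E) (x : EuclideanSpace ℝ E) : EuclideanSpace ℝ E :=
  WithLp.toLp 2 fun j => if j ∈ N then -x j else x j

@[simp]
theorem negOn_apply (N : Set E) (x : EuclideanSpace ℝ E) (j : E) :
    negOn N x j = if j ∈ N then -x j else x j :=
  rfl

@[simp]
theorem negOn_negOn (N : Set E) (x : EuclideanSpace ℝ E) : negOn N (negOn N x) = x := by
  ext j; by_cases hj : j ∈ N <;> simp [hj]

def restrictTo [DecidableEq E] (x : EuclideanSpace ℝ E) (C : Finset E) : EuclideanSpace ℝ E :=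
  WithLp.toLp 2 fun j => if j ∈ C then x j else 0

@[simp]
theorem restrictTo_apply [DecidableEq E] (x : EuclideanSpace ℝ E) (C : Finset E) (j : E) :
    restrictTo x C j = if j ∈ C then x j else 0 :=
  rfl

end Coordinates

namespace Digraph'

variable {V E : Type} [Fintype E] [DecidableEq V] [DecidableEq E]

theorem bd_apply (G : Digraph' V E) (x : EuclideanSpace ℝ E) (v : V) :
    bd G x v = ∑ j, ((if G.s j = v then (1:ℝ) else 0) - (if G.t j = v then 1 else 0)) * x j :=
  rfl

theorem bd_single (G : Digraph' V E) (j : E) :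
    bd G (EuclideanSpace.single j 1) =
      EuclideanSpace.single (G.s j) 1 - EuclideanSpace.single (G.t j) 1 := by
  ext v
  rw [bd_apply, Finset.sum_eq_single j (fun i _ hi => by simp [hi]) (by simp)]
  simp [eq_comm]

theorem exists_pos_edge_from_target {G : Digraph' V E} {f : EuclideanSpace ℝ E} (hf : bd G f = 0)
    (hf0 : ∀ j, 0 ≤ f j) {j : E} (hj : 0 < f j) : ∃ k, G.s k = G.t j ∧ 0 < f k := by
  by_contra! h
  have hv : bd G f (G.t j) = 0 := by rw [hf]; rfl
  rw [bd_apply] at hv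
  simp only [sub_mul, Finset.sum_sub_distrib, ite_mul, one_mul, zero_mul] at hv
  have hout : ∑ k, (if G.s k = G.t j then f k else 0) ≤ 0 :=
    Finset.sum_nonpos fun k _ => by split_ifs with hk <;> simp [h k, hk]
  have hin : f j ≤ ∑ k, (if G.t k = G.t j then f k else 0) := by
    have := Finset.single_le_sum (f := fun k => if G.t k = G.t j then f k else 0)
      (fun k _ => by dsimp only; split_ifs <;> simp [hf0 k]) (Finset.mem_univ j)
    simpa using this
  linarith

theorem exists_cycle_of_nonneg {G : Digraph' V E} {f : EuclideanSpace ℝ E} (hf : bd G f = 0)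
    (hf0 : ∀ j, 0 ≤ f j) (hne : f ≠ 0) :
    ∃ C : Finset E, C.Nonempty ∧ (∀ j ∈ C, 0 < f j) ∧
      bd G (∑ j ∈ C, EuclideanSpace.single j 1) = 0 := by
  obtain ⟨j₀, hj₀⟩ : ∃ j, 0 < f j := by
    by_contra! h
    exact hne (PiLp.ext fun j => le_antisymm (h j) (hf0 j))
  let U : Set E := {j | 0 < f j}
  let next (j : E) : E := if h : ∃ k, G.s k = G.t j ∧ 0 < f k then h.choose else j
  have hnext : ∀ j ∈ U, next j ∈ U ∧ G.s (next j) = G.t j := fun j hj => by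
    have h := exists_pos_edge_from_target hf hf0 hj
    simp only [next, dif_pos h]
    exact ⟨h.choose_spec.2, h.choose_spec.1⟩
  obtain ⟨n, hn⟩ := Function.exists_iterate_mem_periodicPts next j₀
  set j := next^[n] j₀
  have hmaps : Set.MapsTo next U U := fun k hk => (hnext k hk).1
  have hU : ∀ i, next^[i] j ∈ U := fun i => hmaps.iterate i (hmaps.iterate n hj₀)
  set p := Function.minimalPeriod next j
  refine ⟨(Finset.range p).image (next^[·] j), ?_, ?_, ?_⟩
  · have hp : 0 < p := Function.minimalPeriod_pos_of_mem_periodicPts hn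
    exact ⟨j, Finset.mem_image.2 ⟨0, Finset.mem_range.2 hp, rfl⟩⟩
  · simp only [Finset.mem_image]
    rintro _ ⟨i, -, rfl⟩
    exact hU i
  · have hinj : Set.InjOn (next^[·] j) (Finset.range p) := by
      simpa [Set.InjOn] using Function.iterate_injOn_Iio_minimalPeriod (f := next) (x := j)
    have hstep : ∀ i, G.t (next^[i] j) = G.s (next^[i + 1] j) := fun i => by
      rw [Function.iterate_succ_apply', (hnext _ (hU i)).2]
    -- the orbit of `j` under `next` is a closed walk, so the boundary telescopes
    rw [Finset.sum_image hinj, map_sum]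
    simp only [bd_single, hstep]
    rw [Finset.sum_range_sub' (fun i => EuclideanSpace.single (G.s (next^[i] j)) (1:ℝ)),
      Function.iterate_minimalPeriod, Function.iterate_zero_apply, sub_self]

noncomputable def reverseEdges (G : Digraph' V E) (N : Set E) : Digraph' V E where
  s j := if j ∈ N then G.t j else G.s j
  t j := if j ∈ N then G.s j else G.t j

theorem bd_reverseEdges (G : Digraph' V E) (N : Set E) (x : EuclideanSpace ℝ E) :
    bd (G.reverseEdges N) x = bd G (negOn N x) := by
  ext v
  simp only [bd_apply, reverseEdges, negOn_apply]
  refine Finset.sum_congr rfl fun j _ => ?_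
  split_ifs <;> ring

theorem Elementary.mem_of_bd_restrictTo_eq_zero {G : Digraph' V E} {γ : EuclideanSpace ℝ E}
    (hγ : Elementary G γ) {C : Finset E} (hC : bd G (restrictTo γ C) = 0)
    (hCne : ∃ j ∈ C, γ j ≠ 0) {j : E} (hj : γ j ≠ 0) : j ∈ C := by
  obtain ⟨⟨hcyc, hpm⟩, -, hindec⟩ := hγ
  by_contra hjC
  obtain ⟨k, hkC, hk⟩ := hCne
  refine hindec ⟨restrictTo γ C, γ - restrictTo γ C, ⟨hC, fun i => ?_⟩,
    ⟨by rw [map_sub, hcyc, hC, sub_zero], fun i => ?_⟩, fun h => hk ?_, fun h => hj ?_,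
    fun i => ?_, by abel⟩
  · by_cases hi : i ∈ C <;> simp [hi, hpm i]
  · by_cases hi : i ∈ C <;> simp [hi, hpm i]
  · simpa [hkC] using congrArg (· k) h
  · simpa [hjC] using congrArg (· j) h
  · by_cases hi : i ∈ C <;> simp [hi]

theorem Elementary.eq_zero_of_nonneg {G : Digraph' V E} {γ g : EuclideanSpace ℝ E}
    (hγ : Elementary G γ) (hg : bd (G.reverseEdges {j | γ j = -1}) g = 0) (hg0 : ∀ j, 0 ≤ g j)
    (hgγ : ∀ j, γ j = 0 → g j = 0) {j₀ : E} (hj₀ : γ j₀ ≠ 0) (hgj₀ : g j₀ = 0) : g = 0 := by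
  by_contra hgne
  obtain ⟨C, ⟨k, hk⟩, hCpos, hC⟩ := exists_cycle_of_nonneg hg hg0 hgne
  have hCγ : ∀ j ∈ C, γ j ≠ 0 := fun j hj h => (hCpos j hj).ne' (hgγ j h)
  have hrestr : restrictTo γ C = negOn {j | γ j = -1} (∑ j ∈ C, EuclideanSpace.single j 1) := by
    ext j
    by_cases hj : j ∈ C
    · rcases hγ.1.2 j with h | h | h
      · exact absurd h (hCγ j hj)
      all_goals simp [hj, h]
    · simp [hj]
  have hj₀C := hγ.mem_of_bd_restrictTo_eq_zero (by rwa [hrestr, ← bd_reverseEdges])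
    ⟨k, hk, hCγ k hk⟩ hj₀
  exact (hCpos j₀ hj₀C).ne' hgj₀

theorem Elementary.mem_span_of_support_subset {G : Digraph' V E} {γ z : EuclideanSpace ℝ E}
    (hγ : Elementary G γ) (hz : bd G z = 0) (hsupp : ∀ j, γ j = 0 → z j = 0) :
    z ∈ Submodule.span ℝ {γ} := by
  have hpm := hγ.1.2
  obtain ⟨j₀, hj₀, hmin⟩ := (Finset.univ.filter (γ · ≠ 0)).exists_min_image (fun j => γ j * z j)
    (by
      by_contra! h
      exact hγ.2.1 (PiLp.ext fun j => by simpa using congrArg (j ∈ ·) h))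
  simp only [Finset.mem_filter, Finset.mem_univ, true_and] at hj₀ hmin
  set c := γ j₀ * z j₀
  set N : Set E := {j | γ j = -1}
  set g := negOn N (z - c • γ)
  have hg : ∀ j, g j = if γ j = 0 then 0 else γ j * z j - c := fun j => by
    rcases hpm j with h | h | h <;> norm_num [g, N, h, hsupp]
    ring
  have hbdg : bd (G.reverseEdges N) g = 0 := by
    rw [bd_reverseEdges, negOn_negOn, map_sub, map_smul, hz, hγ.1.1, smul_zero, sub_zero]
  have hg0 : ∀ j, 0 ≤ g j := fun j => by
    rw [hg]; split_ifs with h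
    · rfl
    · exact sub_nonneg.2 (hmin j h)
  have hgzero : g = 0 :=
    hγ.eq_zero_of_nonneg hbdg hg0 (fun j h => by simp [hg, h]) hj₀ (by simp [hg, hj₀, c])
  have : z - c • γ = 0 := calc
    z - c • γ = negOn N g := (negOn_negOn N _).symm
    _ = 0 := by ext j; simp [hgzero]
  exact Submodule.mem_span_singleton.2 ⟨c, (sub_eq_zero.1 this).symm⟩

theorem proj_eq_starProjection (G : Digraph' V E) (x : EuclideanSpace ℝ E) :
    proj G x = (LinearMap.ker (bd G)).starProjection x :=
  rfl

theorem proj_mem_ker (G : Digraph' V E) (x : EuclideanSpace ℝ E) :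
    proj G x ∈ LinearMap.ker (bd G) :=
  (proj_eq_starProjection G x).symm ▸ Submodule.starProjection_apply_mem _ x

theorem inner_proj_single {G : Digraph' V E} {y : EuclideanSpace ℝ E}
    (hy : y ∈ LinearMap.ker (bd G)) (j : E) :
    ⟪proj G (EuclideanSpace.single j 1), y⟫ = y j := by
  rw [proj_eq_starProjection, Submodule.inner_starProjection_left_eq_right,
    Submodule.starProjection_eq_self_iff.2 hy, EuclideanSpace.inner_single_left]
  simp

end Digraph'

open Digraph' in
theorem stmt11_general {V E : Type} [Fintype E] [DecidableEq V] [DecidableEq E]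
    (G : Digraph' V E)
    (γ : EuclideanSpace ℝ E) (hγ : Elementary G γ) :
    Submodule.span ℝ {x : EuclideanSpace ℝ E |
        ∃ j, γ j = 0 ∧ x = proj G (EuclideanSpace.single j (1:ℝ))}
      = LinearMap.ker (bd G) ⊓ (Submodule.span ℝ {γ})ᗮ ∧
    Module.finrank ℝ
        (Submodule.span ℝ {x : EuclideanSpace ℝ E |
          ∃ j, γ j = 0 ∧ x = proj G (EuclideanSpace.single j (1:ℝ))}) + 1
      = Module.finrank ℝ (LinearMap.ker (bd G)) := by
  set W := Submodule.span ℝ {x : EuclideanSpace ℝ E |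
    ∃ j, γ j = 0 ∧ x = proj G (EuclideanSpace.single j (1:ℝ))}
  have hγH : Submodule.span ℝ {γ} ≤ LinearMap.ker (bd G) :=
    (Submodule.span_singleton_le_iff_mem _ _).2 hγ.1.1
  have hWle : W ≤ LinearMap.ker (bd G) ⊓ (Submodule.span ℝ {γ})ᗮ := by
    rw [Submodule.span_le]
    rintro _ ⟨j, hj, rfl⟩
    refine ⟨proj_mem_ker G _, Submodule.mem_orthogonal_singleton_iff_inner_left.2 ?_⟩
    rw [inner_proj_single hγ.1.1, hj]
  have hperp : Wᗮ ⊓ (LinearMap.ker (bd G) ⊓ (Submodule.span ℝ {γ})ᗮ) = ⊥ := by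
    refine eq_bot_iff.2 fun z ⟨hzW, hzH, hzγ⟩ => ?_
    have hsupp : ∀ j, γ j = 0 → z j = 0 := fun j hj => by
      rw [← inner_proj_single hzH]
      exact (Submodule.mem_orthogonal _ _).1 hzW _ (Submodule.subset_span ⟨j, hj, rfl⟩)
    rw [← (Submodule.span ℝ {γ}).inf_orthogonal_eq_bot]
    exact ⟨hγ.mem_span_of_support_subset hzH hsupp, hzγ⟩
  have hW : W = LinearMap.ker (bd G) ⊓ (Submodule.span ℝ {γ})ᗮ := by
    rw [← Submodule.sup_orthogonal_inf_of_hasOrthogonalProjection hWle, hperp, sup_bot_eq]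
  refine ⟨hW, ?_⟩
  rw [hW, inf_comm, ← Submodule.finrank_add_inf_finrank_orthogonal hγH,
    finrank_span_singleton hγ.2.1, add_comm]

open Digraph' in
theorem stmt11 {V E : Type} [Fintype V] [Fintype E] [DecidableEq V] [DecidableEq E]
    (G : Digraph' V E) (hconn : Connected G)
    (γ : EuclideanSpace ℝ E) (hγ : Elementary G γ) :
    Submodule.span ℝ {x : EuclideanSpace ℝ E |
        ∃ j, γ j = 0 ∧ x = proj G (EuclideanSpace.single j (1:ℝ))}
      = LinearMap.ker (bd G) ⊓ (Submodule.span ℝ {γ})ᗮ ∧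
    Module.finrank ℝ
        (Submodule.span ℝ {x : EuclideanSpace ℝ E |
          ∃ j, γ j = 0 ∧ x = proj G (EuclideanSpace.single j (1:ℝ))}) + 1
      = Module.finrank ℝ (LinearMap.ker (bd G)) :=
  stmt11_general G γ hγ
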